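/- arXiv:1102.4587 — 3 statements merged into one kernel-verified Lean document; each statement's English description precedes it below -/
import Mathlib

section
/- For any function f : [0,T]^2 → ℝ and any rectangle R ⊆ [0,T]^2, the controlled 1-variation equals the grid 1-variation: |f|_{1-var;R} = V_1(f;R). -/
open Set
open scoped ENNReal NNReal

/-- A closed rectangle `[a,b] × [c,d] ⊆ ℝ²`, encoded by its four corner coordinates. -/
structure Rect where
  a : ℝ
  b : ℝ
  c : ℝ
  d : ℝ

noncomputable instance : DecidableEq Rect := fun _ _ => Classical.dec _

/-- The closed rectangle as a subset of the plane. -/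
def Rect.toSet (R : Rect) : Set (ℝ × ℝ) := Set.Icc R.a R.b ×ˢ Set.Icc R.c R.d

/-- The open interior of the rectangle. -/
def Rect.openSet (R : Rect) : Set (ℝ × ℝ) := Set.Ioo R.a R.b ×ˢ Set.Ioo R.c R.d

/-- The rectangle is well formed: `a ≤ b`, `c ≤ d`. -/
def Rect.Valid (R : Rect) : Prop := R.a ≤ R.b ∧ R.c ≤ R.d

/-- Rectangular increment of `f` over `[a,b] × [c,d]`. -/
def Rect.inc (f : ℝ × ℝ → ℝ) (R : Rect) : ℝ :=
  f (R.b, R.d) - f (R.a, R.d) - f (R.b, R.c) + f (R.a, R.c)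

/-- `P` is a partition of `R` into essentially disjoint rectangles. -/
def IsPartition (R : Rect) (P : Finset Rect) : Prop :=
  (∀ Q ∈ P, Q.Valid) ∧
  ((P : Set Rect).Pairwise fun Q Q' => Disjoint Q.openSet Q'.openSet) ∧
  (⋃ Q ∈ P, Q.toSet) = R.toSet

/-- The controlled `p`-variation of `f` over `R`, raised to the power `p`:
`sup` over all partitions of `R` into essentially disjoint rectangles of
`Σ |f(A)|^p`.  So `|f|_{p-var;R} = (cVarSum p f R) ^ (1/p)`. -/
noncomputable def cVarSum (p : ℝ) (f : ℝ × ℝ → ℝ) (R : Rect) : ℝ≥0∞ :=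
  ⨆ (P : Finset Rect) (_ : IsPartition R P),
    ∑ Q ∈ P, ENNReal.ofReal |Rect.inc f Q| ^ p

/-- The grid `p`-variation of `f` over `R`, raised to the power `p`:
`sup` over grid-like partitions (products of dissections of the two sides)
of `Σ_{i,j} |f([t_i,t_{i+1}] × [s_j,s_{j+1}])|^p`.
So `V_p(f;R) = (gridVarSum p f R) ^ (1/p)`. -/
noncomputable def gridVarSum (p : ℝ) (f : ℝ × ℝ → ℝ) (R : Rect) : ℝ≥0∞ :=
  ⨆ (n : ℕ) (m : ℕ) (t : Fin (n+1) → ℝ) (s : Fin (m+1) → ℝ)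
    (_ : Monotone t) (_ : Monotone s)
    (_ : t 0 = R.a) (_ : t (Fin.last n) = R.b)
    (_ : s 0 = R.c) (_ : s (Fin.last m) = R.d),
    ∑ i : Fin n, ∑ j : Fin m,
      ENNReal.ofReal |Rect.inc f ⟨t i.castSucc, t i.succ, s j.castSucc, s j.succ⟩| ^ p

/-!
A partition of `R` is refined by the grid spanned by all corner coordinates of its rectangles,
and the increment of `f` over a rectangle of the partition is the sum of the increments over the
grid cells it contains. A cell with nonzero increment has nonempty interior, so it lies in at
most one rectangle of the partition; by the triangle inequality the partition sum is therefore
bounded by the grid sum. Conversely a grid is itself a partition, in which cells coincide only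
when they are degenerate and carry no increment.
-/

theorem Fin.sum_univ_succ_sub_castSucc {M : Type*} [AddCommGroup M] {n : ℕ}
    (g : Fin (n + 1) → M) :
    ∑ i : Fin n, (g i.succ - g i.castSucc) = g (Fin.last n) - g 0 := by
  cases n with
  | zero => simp
  | succ k => rw [← Fin.top_eq_last, ← Finset.Iic_top, Fin.sum_Iic_sub]; rfl

section Dissection

variable {n : ℕ} {t : Fin (n + 1) → ℝ}

noncomputable def cellsIn (t : Fin (n + 1) → ℝ) (a b : ℝ) : Finset (Fin n) :=
  {i | a ≤ t i.castSucc ∧ t i.succ ≤ b}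

lemma Monotone.cell_le (ht : Monotone t) (i : Fin n) : t i.castSucc ≤ t i.succ :=
  ht Fin.castSucc_lt_succ.le

lemma Monotone.succ_le_or_le_castSucc (ht : Monotone t) (i : Fin n) (k : Fin (n + 1)) :
    t i.succ ≤ t k ∨ t k ≤ t i.castSucc := by
  rcases le_or_gt i.succ k with h | h
  · exact Or.inl (ht h)
  · exact Or.inr (ht (Fin.le_castSucc_iff.mpr h))

lemma Monotone.disjoint_Ioo_cell (ht : Monotone t) {i j : Fin n} (hij : i ≠ j) :
    Disjoint (Ioo (t i.castSucc) (t i.succ)) (Ioo (t j.castSucc) (t j.succ)) := by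
  wlog h : i < j generalizing i j
  · exact (this hij.symm ((Ne.symm hij).lt_of_le (not_lt.mp h))).symm
  have : t i.succ ≤ t j.castSucc := ht (Fin.succ_le_castSucc_iff.mpr h)
  exact Set.disjoint_left.mpr fun x hi hj => (hi.2.trans_le this).not_gt hj.1

lemma exists_mem_Icc_cell (hn : 0 < n) {x : ℝ}
    (hx : x ∈ Icc (t 0) (t (Fin.last n))) :
    ∃ i : Fin n, x ∈ Icc (t i.castSucc) (t i.succ) := by
  have hne : ({i | t i.castSucc ≤ x} : Finset (Fin n)).Nonempty :=
    ⟨⟨0, hn⟩, by simpa using hx.1⟩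
  set i := Finset.max' _ hne
  have hi : t i.castSucc ≤ x := by simpa using Finset.max'_mem _ hne
  refine ⟨i, hi, not_lt.mp fun hlt => ?_⟩
  rcases Fin.eq_castSucc_or_eq_last i.succ with ⟨j, hj⟩ | hlast
  · have hj_mem : j ∈ ({i | t i.castSucc ≤ x} : Finset (Fin n)) := by
      simpa [← hj] using hlt.le
    have := Finset.le_max' _ _ hj_mem
    have : i.succ ≤ i.castSucc := by rw [hj]; exact Fin.castSucc_le_castSucc_iff.mpr this
    exact absurd this (not_le.mpr Fin.castSucc_lt_succ)
  · exact (hlt.trans_le hx.2).ne (by rw [hlast])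

lemma Monotone.iUnion_Icc_cell (ht : Monotone t) (hn : 0 < n) :
    ⋃ i : Fin n, Icc (t i.castSucc) (t i.succ) = Icc (t 0) (t (Fin.last n)) := by
  refine subset_antisymm (iUnion_subset fun i => Icc_subset_Icc (ht (Fin.zero_le _))
    (ht (Fin.le_last _))) fun x hx => mem_iUnion.mpr (exists_mem_Icc_cell hn hx)

lemma Monotone.sum_cellsIn_sub (ht : Monotone t) {ia ib : Fin (n + 1)} (hab : t ia ≤ t ib)
    (g : ℝ → ℝ) :
    ∑ i ∈ cellsIn t (t ia) (t ib), (g (t i.succ) - g (t i.castSucc)) = g (t ib) - g (t ia) := by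
  -- Clamping to `[t ia, t ib]` turns the sum into a telescoping sum over all cells: a cell
  -- outside `[t ia, t ib]` lies on one side of it, since `t ia` and `t ib` are dissection points.
  set clamp : ℝ → ℝ := fun x => max (t ia) (min (t ib) x)
  have hterm : ∀ i : Fin n, (if t ia ≤ t i.castSucc ∧ t i.succ ≤ t ib then
      g (t i.succ) - g (t i.castSucc) else 0) = g (clamp (t i.succ)) - g (clamp (t i.castSucc)) := by
    intro i
    have := ht.cell_le i
    have := ht.succ_le_or_le_castSucc i ia
    have := ht.succ_le_or_le_castSucc i ib
    grind
  rw [cellsIn, Finset.sum_filter, Finset.sum_congr rfl fun i _ => hterm i,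
    Fin.sum_univ_succ_sub_castSucc (fun k => g (clamp (t k)))]
  have h0 : t 0 ≤ t ia := ht (Fin.zero_le _)
  have hlast : t ib ≤ t (Fin.last n) := ht (Fin.le_last _)
  simp only [clamp]
  grind

end Dissection

lemma exists_dissection {α : Type*} [LinearOrder α] {a b : α} (hab : a ≤ b) (X : Finset α)
    (hX : ∀ x ∈ X, x ∈ Icc a b) :
    ∃ (n : ℕ) (t : Fin (n + 1) → α), Monotone t ∧ t 0 = a ∧ t (Fin.last n) = b ∧
      ∀ x ∈ X, x ∈ range t := by
  set Y := insert a (insert b X)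
  have hY : ∀ y ∈ Y, y ∈ Icc a b := by
    simp only [Y, Finset.mem_insert, forall_eq_or_imp]
    exact ⟨⟨le_rfl, hab⟩, ⟨hab, le_rfl⟩, hX⟩
  have hcard : Y.card = Y.card - 1 + 1 :=
    (Nat.succ_pred_eq_of_pos (Finset.card_pos.mpr ⟨a, Finset.mem_insert_self _ _⟩)).symm
  set t := Y.orderEmbOfFin hcard
  have hrange : ∀ y ∈ Y, y ∈ range t := fun y hy => by
    rwa [Finset.range_orderEmbOfFin]
  have htY : ∀ i, t i ∈ Y := fun i =>
    Finset.mem_coe.mp ((Finset.range_orderEmbOfFin Y hcard).le (mem_range_self i))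
  obtain ⟨ia, hia⟩ := hrange a (Finset.mem_insert_self _ _)
  obtain ⟨ib, hib⟩ := hrange b (Finset.mem_insert_of_mem (Finset.mem_insert_self _ _))
  refine ⟨_, t, t.monotone, ?_, ?_, fun x hx => hrange x (by simp [Y, hx])⟩
  · exact le_antisymm (hia ▸ t.monotone (Fin.zero_le ia)) (hY _ (htY 0)).1
  · exact le_antisymm (hY _ (htY _)).2 (hib ▸ t.monotone (Fin.le_last ib))

lemma Finset.sum_sum_le_sum_of_pairwiseDisjoint_support {ι κ M : Type*} [Fintype κ]
    [AddCommMonoid M] [PartialOrder M] [CanonicallyOrderedAdd M] [DecidableEq κ] [DecidableEq M]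
    {P : Finset ι} {S : ι → Finset κ} {g : κ → M}
    (h : (P : Set ι).PairwiseDisjoint fun i => (S i).filter (g · ≠ 0)) :
    ∑ i ∈ P, ∑ k ∈ S i, g k ≤ ∑ k, g k :=
  calc ∑ i ∈ P, ∑ k ∈ S i, g k = ∑ i ∈ P, ∑ k ∈ (S i).filter (g · ≠ 0), g k := by
        simp only [Finset.sum_filter_ne_zero]
    _ = ∑ k ∈ P.biUnion fun i => (S i).filter (g · ≠ 0), g k := (Finset.sum_biUnion h).symm
    _ ≤ ∑ k, g k := Finset.sum_le_sum_of_subset (Finset.subset_univ _)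

namespace Rect

lemma openSet_nonempty_of_inc_ne_zero {f : ℝ × ℝ → ℝ} {Q : Rect} (hQ : Q.Valid)
    (h : Q.inc f ≠ 0) : Q.openSet.Nonempty := by
  rcases hQ.1.lt_or_eq with hab | hab
  · rcases hQ.2.lt_or_eq with hcd | hcd
    · exact (nonempty_Ioo.mpr hab).prod (nonempty_Ioo.mpr hcd)
    · exact absurd (by rw [inc, hcd]; ring) h
  · exact absurd (by rw [inc, hab]; ring) h

lemma le_of_toSet_subset {Q R : Rect} (hQ : Q.Valid) (h : Q.toSet ⊆ R.toSet) :
    R.a ≤ Q.a ∧ Q.b ≤ R.b ∧ R.c ≤ Q.c ∧ Q.d ≤ R.d := by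
  have hac := h (show (Q.a, Q.c) ∈ Q.toSet from ⟨left_mem_Icc.mpr hQ.1, left_mem_Icc.mpr hQ.2⟩)
  have hbd := h (show (Q.b, Q.d) ∈ Q.toSet from ⟨right_mem_Icc.mpr hQ.1, right_mem_Icc.mpr hQ.2⟩)
  exact ⟨hac.1.1, hbd.1.2, hac.2.1, hbd.2.2⟩

end Rect

section Grid

variable {n m : ℕ} {t : Fin (n + 1) → ℝ} {s : Fin (m + 1) → ℝ}

def gridCell (t : Fin (n + 1) → ℝ) (s : Fin (m + 1) → ℝ) (q : Fin n × Fin m) : Rect :=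
  ⟨t q.1.castSucc, t q.1.succ, s q.2.castSucc, s q.2.succ⟩

lemma gridCell_valid (ht : Monotone t) (hs : Monotone s) (q : Fin n × Fin m) :
    (gridCell t s q).Valid :=
  ⟨ht.cell_le q.1, hs.cell_le q.2⟩

lemma disjoint_openSet_gridCell (ht : Monotone t) (hs : Monotone s) {q q' : Fin n × Fin m}
    (hqq' : q ≠ q') : Disjoint (gridCell t s q).openSet (gridCell t s q').openSet := by
  simp only [Rect.openSet, gridCell, Set.disjoint_prod]
  by_cases h : q.1 = q'.1
  · exact Or.inr (hs.disjoint_Ioo_cell fun h' => hqq' (Prod.ext h h'))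
  · exact Or.inl (ht.disjoint_Ioo_cell h)

lemma openSet_gridCell_subset {a b c d : ℝ} {q : Fin n × Fin m}
    (hq : q ∈ cellsIn t a b ×ˢ cellsIn s c d) :
    (gridCell t s q).openSet ⊆ (⟨a, b, c, d⟩ : Rect).openSet := by
  simp only [Finset.mem_product, cellsIn, Finset.mem_filter, Finset.mem_univ, true_and] at hq
  exact prod_mono (Ioo_subset_Ioo hq.1.1 hq.1.2) (Ioo_subset_Ioo hq.2.1 hq.2.2)

lemma iUnion_toSet_gridCell (ht : Monotone t) (hs : Monotone s) (hn : 0 < n) (hm : 0 < m) :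
    ⋃ q, (gridCell t s q).toSet = Icc (t 0) (t (Fin.last n)) ×ˢ Icc (s 0) (s (Fin.last m)) := by
  simp only [Rect.toSet, gridCell]
  rw [← ht.iUnion_Icc_cell hn, ← hs.iUnion_Icc_cell hm]
  exact Set.iUnion_prod (fun i : Fin n => Icc (t i.castSucc) (t i.succ))
    (fun j : Fin m => Icc (s j.castSucc) (s j.succ))

lemma isPartition_image_gridCell (ht : Monotone t) (hs : Monotone s) (hn : 0 < n) (hm : 0 < m) :
    IsPartition ⟨t 0, t (Fin.last n), s 0, s (Fin.last m)⟩ (Finset.univ.image (gridCell t s)) := by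
  refine ⟨?_, ?_, ?_⟩
  · simp only [Finset.mem_image, Finset.mem_univ, true_and, forall_exists_index,
      forall_apply_eq_imp_iff]
    exact gridCell_valid ht hs
  · simp only [Finset.coe_image, Finset.coe_univ, image_univ]
    rintro _ ⟨q, rfl⟩ _ ⟨q', rfl⟩ hne
    exact disjoint_openSet_gridCell ht hs fun h => hne (h ▸ rfl)
  · rw [Finset.set_biUnion_finset_image]
    simp only [Finset.mem_univ, iUnion_true]
    exact iUnion_toSet_gridCell ht hs hn hm

lemma inc_gridCell_eq_zero_of_eq (ht : Monotone t) (hs : Monotone s) {f : ℝ × ℝ → ℝ}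
    {q q' : Fin n × Fin m} (hqq' : q ≠ q') (heq : gridCell t s q = gridCell t s q') :
    (gridCell t s q).inc f = 0 := by
  have hdisj := disjoint_openSet_gridCell ht hs hqq'
  rw [← heq, disjoint_self, bot_eq_empty] at hdisj
  exact not_imp_comm.mp (Rect.openSet_nonempty_of_inc_ne_zero (gridCell_valid ht hs q))
    (not_nonempty_iff_eq_empty.mpr hdisj)

lemma inc_eq_sum_gridCell (ht : Monotone t) (hs : Monotone s) (f : ℝ × ℝ → ℝ)
    {ia ib : Fin (n + 1)} {jc jd : Fin (m + 1)} (hab : t ia ≤ t ib) (hcd : s jc ≤ s jd) :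
    Rect.inc f ⟨t ia, t ib, s jc, s jd⟩ =
      ∑ q ∈ cellsIn t (t ia) (t ib) ×ˢ cellsIn s (s jc) (s jd), (gridCell t s q).inc f := by
  rw [Finset.sum_product]
  calc Rect.inc f ⟨t ia, t ib, s jc, s jd⟩
      = ∑ i ∈ cellsIn t (t ia) (t ib), ((f (t i.succ, s jd) - f (t i.castSucc, s jd)) -
          (f (t i.succ, s jc) - f (t i.castSucc, s jc))) := by
        rw [Finset.sum_congr rfl fun i _ => sub_sub_sub_comm _ _ _ _,
          ht.sum_cellsIn_sub hab fun x => f (x, s jd) - f (x, s jc), Rect.inc]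
        ring
    _ = _ := Finset.sum_congr rfl fun i _ => by
        rw [← hs.sum_cellsIn_sub hcd fun y => f (t i.succ, y) - f (t i.castSucc, y)]
        exact Finset.sum_congr rfl fun j _ => by rw [gridCell, Rect.inc]; ring

end Grid

section Variation

variable {n m : ℕ} {t : Fin (n + 1) → ℝ} {s : Fin (m + 1) → ℝ} {f : ℝ × ℝ → ℝ} {R : Rect}
  {p : ℝ}

lemma sum_gridCell_le_gridVarSum (ht : Monotone t) (hs : Monotone s) (ht0 : t 0 = R.a)
    (htl : t (Fin.last n) = R.b) (hs0 : s 0 = R.c) (hsl : s (Fin.last m) = R.d) :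
    ∑ q, ENNReal.ofReal |(gridCell t s q).inc f| ^ p ≤ gridVarSum p f R := by
  rw [Fintype.sum_prod_type]
  exact le_iSup₂_of_le n m <| le_iSup₂_of_le t s <| le_iSup₂_of_le ht hs <|
    le_iSup₂_of_le ht0 htl <| le_iSup₂_of_le hs0 hsl le_rfl

lemma sum_gridCell_le_cVarSum (hp : 0 < p) (ht : Monotone t) (hs : Monotone s)
    (ht0 : t 0 = R.a) (htl : t (Fin.last n) = R.b) (hs0 : s 0 = R.c)
    (hsl : s (Fin.last m) = R.d) :
    ∑ q, ENNReal.ofReal |(gridCell t s q).inc f| ^ p ≤ cVarSum p f R := by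
  rcases n.eq_zero_or_pos with rfl | hn
  · simp
  rcases m.eq_zero_or_pos with rfl | hm
  · simp
  have hP : IsPartition R (Finset.univ.image (gridCell t s)) := by
    rw [show R = ⟨t 0, t (Fin.last n), s 0, s (Fin.last m)⟩ by rw [ht0, htl, hs0, hsl]]
    exact isPartition_image_gridCell ht hs hn hm
  calc ∑ q, ENNReal.ofReal |(gridCell t s q).inc f| ^ p
      = ∑ Q ∈ Finset.univ.image (gridCell t s), ENNReal.ofReal |Q.inc f| ^ p :=
        (Finset.sum_image_of_pairwise_eq_zero (f := gridCell t s)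
          (g := fun Q : Rect => ENNReal.ofReal |Q.inc f| ^ p) fun q _ q' _ hqq' heq => by
            simp [inc_gridCell_eq_zero_of_eq ht hs hqq' heq, ENNReal.zero_rpow_of_pos hp]).symm
    _ ≤ cVarSum p f R :=
        le_iSup₂_of_le (f := fun (P : Finset Rect) (_ : IsPartition R P) =>
          ∑ Q ∈ P, ENNReal.ofReal |Q.inc f| ^ p) _ hP le_rfl

lemma gridVarSum_le_cVarSum (hp : 0 < p) : gridVarSum p f R ≤ cVarSum p f R := by
  simp only [gridVarSum, iSup_le_iff]
  intro n m t s ht hs ht0 htl hs0 hsl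
  rw [← Fintype.sum_prod_type']
  exact sum_gridCell_le_cVarSum hp ht hs ht0 htl hs0 hsl

lemma ofReal_abs_inc_le_sum_gridCell (ht : Monotone t) (hs : Monotone s) {Q : Rect}
    (hQ : Q.Valid) (ha : Q.a ∈ range t) (hb : Q.b ∈ range t) (hc : Q.c ∈ range s)
    (hd : Q.d ∈ range s) :
    ENNReal.ofReal |Q.inc f| ≤ ∑ q ∈ cellsIn t Q.a Q.b ×ˢ cellsIn s Q.c Q.d,
      ENNReal.ofReal |(gridCell t s q).inc f| := by
  obtain ⟨a, b, c, d⟩ := Q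
  obtain ⟨ia, rfl⟩ := ha
  obtain ⟨ib, rfl⟩ := hb
  obtain ⟨jc, rfl⟩ := hc
  obtain ⟨jd, rfl⟩ := hd
  rw [inc_eq_sum_gridCell ht hs f hQ.1 hQ.2]
  exact (ENNReal.ofReal_le_ofReal (Finset.abs_sum_le_sum_abs _ _)).trans_eq
    (ENNReal.ofReal_sum_of_nonneg fun _ _ => abs_nonneg _)

lemma cVarSum_one_le_gridVarSum_one (hR : R.Valid) : cVarSum 1 f R ≤ gridVarSum 1 f R := by
  refine iSup₂_le fun P ⟨hval, hdisj, hcover⟩ => ?_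
  have hle : ∀ Q ∈ P, R.a ≤ Q.a ∧ Q.b ≤ R.b ∧ R.c ≤ Q.c ∧ Q.d ≤ R.d := fun Q hQ =>
    Rect.le_of_toSet_subset (hval Q hQ) (hcover ▸ subset_biUnion_of_mem hQ)
  obtain ⟨n, t, ht, ht0, htl, ht_mem⟩ := exists_dissection hR.1 (P.image Rect.a ∪ P.image Rect.b)
    (by simp only [Finset.mem_union, Finset.mem_image]
        rintro _ (⟨Q, hQ, rfl⟩ | ⟨Q, hQ, rfl⟩) <;> grind [Rect.Valid])
  obtain ⟨m, s, hs, hs0, hsl, hs_mem⟩ := exists_dissection hR.2 (P.image Rect.c ∪ P.image Rect.d)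
    (by simp only [Finset.mem_union, Finset.mem_image]
        rintro _ (⟨Q, hQ, rfl⟩ | ⟨Q, hQ, rfl⟩) <;> grind [Rect.Valid])
  set g : Fin n × Fin m → ℝ≥0∞ := fun q => ENNReal.ofReal |(gridCell t s q).inc f|
  have hsupport : (P : Set Rect).PairwiseDisjoint
      fun Q => (cellsIn t Q.a Q.b ×ˢ cellsIn s Q.c Q.d).filter (g · ≠ 0) := by
    intro Q hQ Q' hQ' hne
    refine Finset.disjoint_left.mpr fun q hq hq' => ?_
    rw [Finset.mem_filter] at hq hq'
    have hq0 : (gridCell t s q).inc f ≠ 0 := fun h => hq.2 (by simp [g, h])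
    obtain ⟨z, hz⟩ := Rect.openSet_nonempty_of_inc_ne_zero (gridCell_valid ht hs q) hq0
    exact Set.disjoint_left.mp (hdisj hQ hQ' hne) (openSet_gridCell_subset hq.1 hz)
      (openSet_gridCell_subset hq'.1 hz)
  calc ∑ Q ∈ P, ENNReal.ofReal |Q.inc f| ^ (1 : ℝ)
      = ∑ Q ∈ P, ENNReal.ofReal |Q.inc f| := by simp only [ENNReal.rpow_one]
    _ ≤ ∑ Q ∈ P, ∑ q ∈ cellsIn t Q.a Q.b ×ˢ cellsIn s Q.c Q.d, g q :=
        Finset.sum_le_sum fun Q hQ => ofReal_abs_inc_le_sum_gridCell ht hs (hval Q hQ)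
          (ht_mem _ (Finset.mem_union_left _ (Finset.mem_image_of_mem _ hQ)))
          (ht_mem _ (Finset.mem_union_right _ (Finset.mem_image_of_mem _ hQ)))
          (hs_mem _ (Finset.mem_union_left _ (Finset.mem_image_of_mem _ hQ)))
          (hs_mem _ (Finset.mem_union_right _ (Finset.mem_image_of_mem _ hQ)))
    _ ≤ ∑ q, g q := Finset.sum_sum_le_sum_of_pairwiseDisjoint_support hsupport
    _ ≤ gridVarSum 1 f R := by
        simpa only [ENNReal.rpow_one] using
          sum_gridCell_le_gridVarSum (f := f) (p := 1) ht hs ht0 htl hs0 hsl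

end Variation

theorem controlled_one_var_eq_grid_one_var_general
    (f : ℝ × ℝ → ℝ) (R : Rect) (hR : R.Valid) :
    cVarSum 1 f R = gridVarSum 1 f R :=
  le_antisymm (cVarSum_one_le_gridVarSum_one hR) (gridVarSum_le_cVarSum one_pos)

/-- `|f|_{1-var;R} = V_1(f;R)` for every rectangle `R ⊆ [0,T]²`. -/
theorem controlled_one_var_eq_grid_one_var (T : ℝ) (hT : 0 < T)
    (f : ℝ × ℝ → ℝ) (R : Rect) (hR : R.Valid)
    (hsub : R.toSet ⊆ (Rect.mk 0 T 0 T).toSet) :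
    cVarSum 1 f R = gridVarSum 1 f R :=
  controlled_one_var_eq_grid_one_var_general f R hR
end

section
/- If f : [0,T]^2 → ℝ is continuous and of finite controlled p-variation, then ω(R) := |f|^p_{p-var;R} is a 2D control: it is continuous (as a function of the four corner coordinates of R), vanishes on degenerate rectangles, and is super-additive over finite partitions into essentially disjoint rectangles. -/
open Set
open scoped ENNReal NNReal

/-- The set `Δ_T × Δ_T` of (coordinates of) rectangles contained in `[0,T]²`. -/
def DeltaSq (T : ℝ) : Set (ℝ × ℝ × ℝ × ℝ) :=
  {x | 0 ≤ x.1 ∧ x.1 ≤ x.2.1 ∧ x.2.1 ≤ T ∧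
       0 ≤ x.2.2.1 ∧ x.2.2.1 ≤ x.2.2.2 ∧ x.2.2.2 ≤ T}

/-- `ω` is a 2D control on `[0,T]²`: finite `[0,∞)`-valued, continuous as a function of
the four corner coordinates on `Δ_T × Δ_T`, zero on degenerate rectangles, and
super-additive over finite partitions into essentially disjoint rectangles. -/
def Is2DControl (T : ℝ) (ω : Rect → ℝ≥0∞) : Prop :=
  (∀ R : Rect, R.toSet ⊆ (Rect.mk 0 T 0 T).toSet → ω R ≠ ⊤) ∧
  ContinuousOn (fun x : ℝ × ℝ × ℝ × ℝ => ω ⟨x.1, x.2.1, x.2.2.1, x.2.2.2⟩) (DeltaSq T) ∧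
  (∀ R : Rect, R.Valid → (R.a = R.b ∨ R.c = R.d) → ω R = 0) ∧
  (∀ R : Rect, R.Valid → R.toSet ⊆ (Rect.mk 0 T 0 T).toSet →
    ∀ P : Finset Rect, IsPartition R P → ∑ Q ∈ P, ω Q ≤ ω R)

/-!
Super-additivity holds because partitions of the members of a partition of `R` glue to a partition
of `R`. For continuity, `ω` is monotone under inclusion, and by uniform continuity of `f` a
near-optimal partition of `S` can be clamped to any slightly smaller `W ⊆ S` at little cost (inner
regularity). Conversely, if `S ⊇ R` is slightly larger, every member of a partition of `S` splits
into its part in `R` and four parts in the thin frame around `R`; since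
`(x + y) ^ p ≤ (1 + θ) ^ p x ^ p + (1 + θ⁻¹) ^ p y ^ p`, this gives
`ω S ≤ (1 + θ) ^ p ω R + C_θ ω(frame)`, and each frame piece has small variation because it is cut
off from a fixed rectangle by a cut close to its edge, where inner regularity applies.
-/

open Filter Topology

namespace Rect

variable {B Q R R' S W : Rect}

def IsSubrect (Q S : Rect) : Prop :=
  S.a ≤ Q.a ∧ Q.b ≤ S.b ∧ S.c ≤ Q.c ∧ Q.d ≤ S.d

theorem IsSubrect.refl (Q : Rect) : Q.IsSubrect Q :=
  ⟨le_rfl, le_rfl, le_rfl, le_rfl⟩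

theorem IsSubrect.trans (hQR : Q.IsSubrect R) (hRS : R.IsSubrect S) : Q.IsSubrect S :=
  ⟨hRS.1.trans hQR.1, hQR.2.1.trans hRS.2.1, hRS.2.2.1.trans hQR.2.2.1,
    hQR.2.2.2.trans hRS.2.2.2⟩

theorem IsSubrect.valid (h : Q.IsSubrect S) (hQ : Q.Valid) : S.Valid :=
  ⟨h.1.trans (hQ.1.trans h.2.1), h.2.2.1.trans (hQ.2.trans h.2.2.2)⟩

theorem IsSubrect.toSet_subset (h : Q.IsSubrect S) : Q.toSet ⊆ S.toSet :=
  prod_mono (Icc_subset_Icc h.1 h.2.1) (Icc_subset_Icc h.2.2.1 h.2.2.2)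

theorem IsSubrect.openSet_subset (h : Q.IsSubrect S) : Q.openSet ⊆ S.openSet :=
  prod_mono (Ioo_subset_Ioo h.1 h.2.1) (Ioo_subset_Ioo h.2.2.1 h.2.2.2)

theorem isSubrect_of_toSet_subset (hQ : Q.Valid) (h : Q.toSet ⊆ S.toSet) :
    Q.IsSubrect S := by
  have hac := h (mk_mem_prod (left_mem_Icc.2 hQ.1) (left_mem_Icc.2 hQ.2))
  have hbd := h (mk_mem_prod (right_mem_Icc.2 hQ.1) (right_mem_Icc.2 hQ.2))
  exact ⟨hac.1.1, hbd.1.2, hac.2.1, hbd.2.2⟩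

theorem openSet_eq_empty_of_not_valid (hQ : ¬ Q.Valid) : Q.openSet = ∅ := by
  rw [Valid, not_and_or, not_le, not_le] at hQ
  rcases hQ with h | h <;> simp [openSet, Ioo_eq_empty_of_le h.le]

theorem inc_eq_zero_of_openSet_eq_empty (f : ℝ × ℝ → ℝ) (hQ : Q.Valid) (h : Q.openSet = ∅) :
    Q.inc f = 0 := by
  rcases prod_eq_empty_iff.1 h with h | h <;> rw [Ioo_eq_empty_iff, not_lt] at h
  · rw [inc, le_antisymm hQ.1 h]; ring
  · rw [inc, le_antisymm hQ.2 h]; ring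

theorem vcut_union {a m b c d : ℝ} (ham : a ≤ m) (hmb : m ≤ b) :
    (⟨a, m, c, d⟩ : Rect).toSet ∪ (⟨m, b, c, d⟩ : Rect).toSet = (⟨a, b, c, d⟩ : Rect).toSet := by
  simp only [toSet, ← union_prod, Icc_union_Icc_eq_Icc ham hmb]

theorem hcut_union {a b c m d : ℝ} (hcm : c ≤ m) (hmd : m ≤ d) :
    (⟨a, b, c, m⟩ : Rect).toSet ∪ (⟨a, b, m, d⟩ : Rect).toSet = (⟨a, b, c, d⟩ : Rect).toSet := by
  simp only [toSet, ← prod_union, Icc_union_Icc_eq_Icc hcm hmd]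

theorem vcut_disjoint (a m b c d : ℝ) :
    Disjoint (⟨a, m, c, d⟩ : Rect).openSet (⟨m, b, c, d⟩ : Rect).openSet :=
  disjoint_prod.2 <| .inl <| Ico_disjoint_Ico_same.mono Ioo_subset_Ico_self Ioo_subset_Ico_self

theorem hcut_disjoint (a b c m d : ℝ) :
    Disjoint (⟨a, b, c, m⟩ : Rect).openSet (⟨a, b, m, d⟩ : Rect).openSet :=
  disjoint_prod.2 <| .inr <| Ico_disjoint_Ico_same.mono Ioo_subset_Ico_self Ioo_subset_Ico_self

def coords (R : Rect) : ℝ × ℝ × ℝ × ℝ := (R.a, R.b, R.c, R.d)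

def ofCoords (x : ℝ × ℝ × ℝ × ℝ) : Rect := ⟨x.1, x.2.1, x.2.2.1, x.2.2.2⟩

theorem ofCoords_coords (R : Rect) : ofCoords R.coords = R := rfl

theorem dist_coords (R R' : Rect) : dist R.coords R'.coords =
    max (dist R.a R'.a) (max (dist R.b R'.b) (max (dist R.c R'.c) (dist R.d R'.d))) := rfl

theorem dist_coords_lt_iff {δ : ℝ} : dist R.coords R'.coords < δ ↔
    dist R.a R'.a < δ ∧ dist R.b R'.b < δ ∧ dist R.c R'.c < δ ∧ dist R.d R'.d < δ := by
  simp only [dist_coords, max_lt_iff]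

def subrects (B : Rect) : Set (ℝ × ℝ × ℝ × ℝ) :=
  {x | B.a ≤ x.1 ∧ x.1 ≤ x.2.1 ∧ x.2.1 ≤ B.b ∧ B.c ≤ x.2.2.1 ∧ x.2.2.1 ≤ x.2.2.2 ∧ x.2.2.2 ≤ B.d}

theorem coords_mem_subrects : R.coords ∈ B.subrects ↔ R.Valid ∧ R.IsSubrect B := by
  simp only [subrects, coords, Valid, IsSubrect, mem_ofPred_eq]
  tauto

/-- The corners of `W` projected onto `Q`: this is `Q ∩ W` when the two rectangles meet, and a
degenerate rectangle on the boundary of `Q` otherwise. -/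
def clamp (Q W : Rect) : Rect :=
  ⟨max Q.a (min Q.b W.a), max Q.a (min Q.b W.b), max Q.c (min Q.d W.c), max Q.c (min Q.d W.d)⟩

theorem clamp_valid (hW : W.Valid) : (Q.clamp W).Valid :=
  ⟨max_le_max le_rfl (min_le_min le_rfl hW.1), max_le_max le_rfl (min_le_min le_rfl hW.2)⟩

theorem clamp_isSubrect (hQ : Q.Valid) : (Q.clamp W).IsSubrect Q :=
  ⟨le_max_left _ _, max_le hQ.1 (min_le_left _ _), le_max_left _ _, max_le hQ.2 (min_le_left _ _)⟩

theorem clamp_isSubrect_or_openSet_eq_empty (hQ : Q.Valid) (hW : W.Valid) :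
    (Q.clamp W).IsSubrect W ∨ (Q.clamp W).openSet = ∅ := by
  obtain ⟨hQ₁, hQ₂⟩ := hQ
  obtain ⟨hW₁, hW₂⟩ := hW
  by_cases h : W.a ≤ Q.b ∧ Q.a ≤ W.b ∧ W.c ≤ Q.d ∧ Q.c ≤ W.d
  · left
    simp only [IsSubrect, clamp]
    grind
  · right
    simp only [openSet, clamp, prod_eq_empty_iff, Ioo_eq_empty_iff]
    grind

theorem mem_clamp {x : ℝ × ℝ} (hxQ : x ∈ Q.toSet) (hxW : x ∈ W.toSet) :
    x ∈ (Q.clamp W).toSet ∧ (Q.clamp W).IsSubrect W := by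
  simp only [toSet, clamp, IsSubrect, mem_prod, mem_Icc] at hxQ hxW ⊢
  grind

theorem dist_clamp_le (hQ : Q.Valid) (h : Q.IsSubrect S) :
    dist (Q.clamp W).coords Q.coords ≤ dist W.coords S.coords := by
  obtain ⟨hQ₁, hQ₂⟩ := hQ
  obtain ⟨ha, hb, hc, hd⟩ := h
  simp only [dist_coords, clamp, Real.dist_eq]
  refine max_le_max ?_ (max_le_max ?_ (max_le_max ?_ ?_)) <;> grind

def hull (R R' : Rect) : Rect :=
  ⟨min R.a R'.a, max R.b R'.b, min R.c R'.c, max R.d R'.d⟩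

theorem isSubrect_hull_left : R.IsSubrect (R.hull R') :=
  ⟨min_le_left _ _, le_max_left _ _, min_le_left _ _, le_max_left _ _⟩

theorem isSubrect_hull_right : R'.IsSubrect (R.hull R') :=
  ⟨min_le_right _ _, le_max_right _ _, min_le_right _ _, le_max_right _ _⟩

theorem hull_isSubrect (h : R.IsSubrect B) (h' : R'.IsSubrect B) : (R.hull R').IsSubrect B :=
  ⟨le_min h.1 h'.1, max_le h.2.1 h'.2.1, le_min h.2.2.1 h'.2.2.1, max_le h.2.2.2 h'.2.2.2⟩

theorem dist_hull_le : dist (R.hull R').coords R.coords ≤ dist R'.coords R.coords := by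
  simp only [dist_coords, hull, Real.dist_eq]
  refine max_le_max ?_ (max_le_max ?_ (max_le_max ?_ ?_)) <;> grind

/-- `S` minus the interior of `R`, cut into four rectangles: the full-height strips to the left
and right of `R`, and the pieces below and above `R`. -/
def frame (S R : Rect) : Fin 4 → Rect :=
  ![⟨S.a, R.a, S.c, S.d⟩, ⟨R.b, S.b, S.c, S.d⟩, ⟨R.a, R.b, S.c, R.c⟩, ⟨R.a, R.b, R.d, S.d⟩]

theorem frame_valid (hR : R.Valid) (hRS : R.IsSubrect S) (i : Fin 4) : (S.frame R i).Valid := by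
  have hS := hRS.valid hR
  obtain ⟨ha, hb, hc, hd⟩ := hRS
  fin_cases i
  exacts [⟨ha, hS.2⟩, ⟨hb, hS.2⟩, ⟨hR.1, hc⟩, ⟨hR.1, hd⟩]

theorem frame_isSubrect (hR : R.Valid) (hRS : R.IsSubrect S) (i : Fin 4) :
    (S.frame R i).IsSubrect S := by
  obtain ⟨ha, hb, hc, hd⟩ := hRS
  fin_cases i
  exacts [⟨le_rfl, hR.1.trans hb, le_rfl, le_rfl⟩, ⟨ha.trans hR.1, le_rfl, le_rfl, le_rfl⟩,
    ⟨ha, hb, le_rfl, hR.2.trans hd⟩, ⟨ha, hb, hc.trans hR.2, le_rfl⟩]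

theorem inc_eq_inc_clamp_add_sum_frame (f : ℝ × ℝ → ℝ) (hQ : Q.Valid) (hQS : Q.IsSubrect S) :
    Q.inc f = (Q.clamp R).inc f + ∑ i, (Q.clamp (S.frame R i)).inc f := by
  obtain ⟨ha, hb, hc, hd⟩ := hQS
  obtain ⟨hab, hcd⟩ := hQ
  have h₁ : max Q.a (min Q.b S.a) = Q.a := by grind
  have h₂ : max Q.a (min Q.b S.b) = Q.b := by grind
  have h₃ : max Q.c (min Q.d S.c) = Q.c := by grind
  have h₄ : max Q.c (min Q.d S.d) = Q.d := by grind
  simp only [Fin.sum_univ_four, frame, clamp, inc, Matrix.cons_val, h₁, h₂, h₃, h₄]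
  ring

noncomputable def incPow (p : ℝ) (f : ℝ × ℝ → ℝ) (Q : Rect) : ℝ≥0∞ :=
  ENNReal.ofReal |Q.inc f| ^ p

variable {p : ℝ} {f : ℝ × ℝ → ℝ}

theorem incPow_eq_zero (hp : 0 < p) (hQ : Q.Valid) (h : Q.openSet = ∅) : Q.incPow p f = 0 := by
  simp [incPow, inc_eq_zero_of_openSet_eq_empty f hQ h, hp]

theorem openSet_nonempty_of_incPow_ne_zero (hp : 0 < p) (hQ : Q.Valid)
    (h : Q.incPow p f ≠ 0) : Q.openSet.Nonempty :=
  nonempty_iff_ne_empty.2 fun h' => h (incPow_eq_zero hp hQ h')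

end Rect

open Rect

section Variation

variable {p : ℝ} {f : ℝ × ℝ → ℝ} {R S U V W : Rect} {P : Finset Rect}

theorem sum_incPow_le_cVarSum (hP : IsPartition R P) :
    ∑ Q ∈ P, Q.incPow p f ≤ cVarSum p f R :=
  le_iSup₂ (f := fun P _ => ∑ Q ∈ P, Q.incPow p f) P hP

theorem cVarSum_le {c : ℝ≥0∞} (h : ∀ P, IsPartition R P → ∑ Q ∈ P, Q.incPow p f ≤ c) :
    cVarSum p f R ≤ c :=
  iSup₂_le h

theorem IsPartition.isSubrect (hP : IsPartition R P) {Q : Rect} (hQ : Q ∈ P) : Q.IsSubrect R :=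
  isSubrect_of_toSet_subset (hP.1 Q hQ) (hP.2.2 ▸ subset_biUnion_of_mem (u := toSet) hQ)

theorem isPartition_singleton (hR : R.Valid) : IsPartition R {R} :=
  ⟨by simpa using hR, by simp, by simp⟩

theorem isPartition_pair (hunion : W.toSet ∪ V.toSet = U.toSet)
    (hdisj : Disjoint W.openSet V.openSet) (hW : W.Valid) (hV : V.Valid) :
    IsPartition U {W, V} := by
  refine ⟨by simp [hW, hV], ?_, by simpa using hunion⟩
  rw [Finset.coe_pair]
  exact pairwise_pair.2 fun _ => ⟨hdisj, hdisj.symm⟩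

theorem cVarSum_eq_zero (hp : 0 < p) (h : R.openSet = ∅) : cVarSum p f R = 0 :=
  nonpos_iff_eq_zero.1 <| cVarSum_le fun _ hP => (Finset.sum_eq_zero fun _ hQ =>
    incPow_eq_zero hp (hP.1 _ hQ) (subset_empty_iff.1 (h ▸ (hP.isSubrect hQ).openSet_subset))).le

theorem IsPartition.biUnion (hP : IsPartition R P) {g : Rect → Finset Rect}
    (hg : ∀ Q ∈ P, IsPartition Q (g Q)) : IsPartition R (P.biUnion g) := by
  refine ⟨fun A hA => ?_, fun A hA B hB hAB => ?_, ?_⟩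
  · obtain ⟨Q, hQ, hAQ⟩ := Finset.mem_biUnion.1 hA
    exact (hg Q hQ).1 A hAQ
  · obtain ⟨Q₁, hQ₁, hA₁⟩ := Finset.mem_biUnion.1 hA
    obtain ⟨Q₂, hQ₂, hB₂⟩ := Finset.mem_biUnion.1 hB
    by_cases hQ : Q₁ = Q₂
    · subst hQ
      exact (hg Q₁ hQ₁).2.1 hA₁ hB₂ hAB
    · exact (hP.2.1 hQ₁ hQ₂ hQ).mono ((hg Q₁ hQ₁).isSubrect hA₁).openSet_subset
        ((hg Q₂ hQ₂).isSubrect hB₂).openSet_subset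
  · rw [Finset.set_biUnion_biUnion, ← hP.2.2]
    exact iUnion₂_congr fun Q hQ => (hg Q hQ).2.2

/-- Degenerate pieces shared by the refinements of several members carry no weight. -/
theorem sum_sum_incPow_le_cVarSum (hp : 0 < p) (hP : IsPartition R P) {g : Rect → Finset Rect}
    (hg : ∀ Q ∈ P, IsPartition Q (g Q)) :
    ∑ Q ∈ P, ∑ A ∈ g Q, A.incPow p f ≤ cVarSum p f R := by
  classical
  have hdisj : (P : Set Rect).PairwiseDisjoint fun Q => {A ∈ g Q | A.incPow p f ≠ 0} := by
    intro Q₁ hQ₁ Q₂ hQ₂ hQ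
    refine Finset.disjoint_left.2 fun A hA₁ hA₂ => ?_
    rw [Finset.mem_filter] at hA₁ hA₂
    obtain ⟨x, hx⟩ := openSet_nonempty_of_incPow_ne_zero hp ((hg Q₁ hQ₁).1 A hA₁.1) hA₁.2
    exact disjoint_left.1 (hP.2.1 hQ₁ hQ₂ hQ)
      (((hg Q₁ hQ₁).isSubrect hA₁.1).openSet_subset hx)
      (((hg Q₂ hQ₂).isSubrect hA₂.1).openSet_subset hx)
  calc ∑ Q ∈ P, ∑ A ∈ g Q, A.incPow p f
      = ∑ A ∈ P.biUnion fun Q => {A ∈ g Q | A.incPow p f ≠ 0}, A.incPow p f := by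
        rw [Finset.sum_biUnion hdisj]
        simp_rw [Finset.sum_filter_ne_zero]
    _ ≤ ∑ A ∈ P.biUnion g, A.incPow p f :=
        Finset.sum_le_sum_of_subset (Finset.biUnion_mono fun _ _ => Finset.filter_subset _ _)
    _ ≤ cVarSum p f R := sum_incPow_le_cVarSum (hP.biUnion hg)

theorem sum_cVarSum_le (hp : 0 < p) (hP : IsPartition R P) :
    ∑ Q ∈ P, cVarSum p f Q ≤ cVarSum p f R := by
  classical
  let Refinement := {g : Rect → Finset Rect // ∀ Q ∈ P, IsPartition Q (g Q)}
  have hsup : ∀ Q ∈ P, cVarSum p f Q = ⨆ g : Refinement, ∑ A ∈ g.1 Q, A.incPow p f := by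
    intro Q hQ
    refine le_antisymm (cVarSum_le fun P' hP' => ?_)
      (iSup_le fun g => sum_incPow_le_cVarSum (g.2 Q hQ))
    refine le_iSup_of_le ⟨Function.update (fun Q' => {Q'}) Q P', fun Q' hQ' => ?_⟩ (by simp)
    by_cases h : Q' = Q
    · subst h
      simpa using hP'
    · simpa [h] using isPartition_singleton (hP.1 Q' hQ')
  rw [Finset.sum_congr rfl hsup, ENNReal.finsetSum_iSup]
  · exact iSup_le fun g => sum_sum_incPow_le_cVarSum hp hP g.2
  · intro g₁ g₂
    let g : Rect → Finset Rect := fun Q =>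
      if ∑ A ∈ g₁.1 Q, A.incPow p f ≤ ∑ A ∈ g₂.1 Q, A.incPow p f then g₂.1 Q else g₁.1 Q
    refine ⟨⟨g, fun Q hQ => ?_⟩, fun Q => ?_⟩ <;> dsimp only [g] <;> split_ifs with h
    exacts [g₂.2 Q hQ, g₁.2 Q hQ, ⟨h, le_rfl⟩, ⟨le_rfl, (not_le.1 h).le⟩]

theorem cVarSum_add_cVarSum_le (hp : 0 < p) (hunion : W.toSet ∪ V.toSet = U.toSet)
    (hdisj : Disjoint W.openSet V.openSet) (hW : W.Valid) (hV : V.Valid) :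
    cVarSum p f W + cVarSum p f V ≤ cVarSum p f U := by
  by_cases hWV : W = V
  · subst hWV
    simp [cVarSum_eq_zero hp (disjoint_self.1 hdisj)]
  · simpa [Finset.sum_pair hWV] using sum_cVarSum_le hp (isPartition_pair hunion hdisj hW hV)

theorem cVarSum_mono (hp : 0 < p) (hR : R.Valid) (h : R.IsSubrect S) :
    cVarSum p f R ≤ cVarSum p f S := by
  have hS := h.valid hR
  obtain ⟨ha, hb, hc, hd⟩ := h
  calc cVarSum p f R
      ≤ cVarSum p f ⟨R.a, R.b, R.c, S.d⟩ := le_self_add.trans <|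
        cVarSum_add_cVarSum_le hp (hcut_union hR.2 hd) (hcut_disjoint ..) hR ⟨hR.1, hd⟩
    _ ≤ cVarSum p f ⟨R.a, R.b, S.c, S.d⟩ := le_add_self.trans <|
        cVarSum_add_cVarSum_le hp (hcut_union hc (hR.2.trans hd)) (hcut_disjoint ..)
          ⟨hR.1, hc⟩ ⟨hR.1, hR.2.trans hd⟩
    _ ≤ cVarSum p f ⟨R.a, S.b, S.c, S.d⟩ := le_self_add.trans <|
        cVarSum_add_cVarSum_le hp (vcut_union hR.1 hb) (vcut_disjoint ..) ⟨hR.1, hS.2⟩ ⟨hb, hS.2⟩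
    _ ≤ cVarSum p f ⟨S.a, S.b, S.c, S.d⟩ := le_add_self.trans <|
        cVarSum_add_cVarSum_le hp (vcut_union ha (hR.1.trans hb)) (vcut_disjoint ..)
          ⟨ha, hS.2⟩ ⟨hR.1.trans hb, hS.2⟩

end Variation

section Clamp

variable {p : ℝ} {f : ℝ × ℝ → ℝ} {Q S W : Rect} {P : Finset Rect}

open Classical in
theorem isPartition_clamp (hP : IsPartition S P) (hW : W.Valid) (hWS : W.IsSubrect S) :
    IsPartition W ({Q ∈ P | (Q.clamp W).IsSubrect W}.image (·.clamp W)) := by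
  refine ⟨?_, ?_, ?_⟩
  · simp only [Finset.mem_image]
    rintro _ ⟨Q, -, rfl⟩
    exact clamp_valid hW
  · rw [Finset.coe_image]
    rintro _ ⟨Q₁, hQ₁, rfl⟩ _ ⟨Q₂, hQ₂, rfl⟩ hne
    rw [Finset.mem_coe, Finset.mem_filter] at hQ₁ hQ₂
    exact (hP.2.1 hQ₁.1 hQ₂.1 fun h => hne (h ▸ rfl)).mono
      (clamp_isSubrect (hP.1 _ hQ₁.1)).openSet_subset
      (clamp_isSubrect (hP.1 _ hQ₂.1)).openSet_subset
  · refine Subset.antisymm (iUnion₂_subset fun A hA => ?_) fun x hx => ?_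
    · obtain ⟨Q, hQ, rfl⟩ := Finset.mem_image.1 hA
      exact (Finset.mem_filter.1 hQ).2.toSet_subset
    · obtain ⟨Q, hQ, hxQ⟩ := mem_iUnion₂.1 (hP.2.2 ▸ hWS.toSet_subset hx)
      obtain ⟨hx', hsub⟩ := mem_clamp hxQ hx
      exact mem_iUnion₂.2 ⟨_, Finset.mem_image_of_mem _ (Finset.mem_filter.2 ⟨hQ, hsub⟩), hx'⟩

theorem sum_incPow_clamp_le_cVarSum (hp : 0 < p) (hP : IsPartition S P) (hW : W.Valid)
    (hWS : W.IsSubrect S) : ∑ Q ∈ P, (Q.clamp W).incPow p f ≤ cVarSum p f W := by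
  classical
  have hne : ∀ Q : Rect, (Q.clamp W).incPow p f ≠ 0 → (Q.clamp W).openSet.Nonempty :=
    fun Q => openSet_nonempty_of_incPow_ne_zero hp (clamp_valid hW)
  have hinj : InjOn (fun Q : Rect => Q.clamp W)
      ({Q ∈ P | (Q.clamp W).incPow p f ≠ 0} : Finset Rect) := by
    intro Q₁ hQ₁ Q₂ hQ₂ (h : Q₁.clamp W = Q₂.clamp W)
    rw [Finset.mem_coe, Finset.mem_filter] at hQ₁ hQ₂
    by_contra hQ
    obtain ⟨x, hx⟩ := hne _ hQ₁.2
    exact disjoint_left.1 (hP.2.1 hQ₁.1 hQ₂.1 hQ)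
      ((clamp_isSubrect (hP.1 _ hQ₁.1)).openSet_subset hx)
      ((clamp_isSubrect (hP.1 _ hQ₂.1)).openSet_subset (h ▸ hx))
  have hsub : {Q ∈ P | (Q.clamp W).incPow p f ≠ 0} ⊆ {Q ∈ P | (Q.clamp W).IsSubrect W} := by
    intro Q hQ
    rw [Finset.mem_filter] at hQ ⊢
    exact ⟨hQ.1, (clamp_isSubrect_or_openSet_eq_empty (hP.1 Q hQ.1) hW).resolve_right
      (hne Q hQ.2).ne_empty⟩
  calc ∑ Q ∈ P, (Q.clamp W).incPow p f
      = ∑ A ∈ {Q ∈ P | (Q.clamp W).incPow p f ≠ 0}.image (·.clamp W), A.incPow p f := by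
        rw [Finset.sum_image hinj, Finset.sum_filter_ne_zero]
    _ ≤ ∑ A ∈ {Q ∈ P | (Q.clamp W).IsSubrect W}.image (·.clamp W), A.incPow p f :=
        Finset.sum_le_sum_of_subset (Finset.image_subset_image hsub)
    _ ≤ cVarSum p f W := sum_incPow_le_cVarSum (isPartition_clamp hP hW hWS)

theorem cVarSum_clamp_le (hp : 0 < p) (hQ : Q.Valid) (hW : W.Valid) :
    cVarSum p f (Q.clamp W) ≤ cVarSum p f W := by
  rcases clamp_isSubrect_or_openSet_eq_empty hQ hW with h | h
  · exact cVarSum_mono hp (clamp_valid hW) h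
  · simp [cVarSum_eq_zero hp h]

end Clamp

section InnerRegularity

variable {p : ℝ} {f : ℝ × ℝ → ℝ} {B R S : Rect}

theorem isCompact_subrects (B : Rect) : IsCompact B.subrects := by
  refine (isCompact_Icc (a := (B.a, B.a, B.c, B.c)) (b := (B.b, B.b, B.d, B.d))).of_isClosed_subset
    ?_ fun x hx => ?_
  · simp only [subrects, ofPred_and]
    apply_rules [IsClosed.inter, isClosed_le] <;> fun_prop
  · simp only [subrects, mem_ofPred_eq] at hx
    simp only [mem_Icc, Prod.le_def]
    grind

theorem continuousOn_abs_inc_rpow (hp : 0 ≤ p) (hf : ContinuousOn f B.toSet) :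
    ContinuousOn (fun x => |(ofCoords x).inc f| ^ p) B.subrects := by
  have corner : ∀ {u v : ℝ × ℝ × ℝ × ℝ → ℝ}, Continuous u → Continuous v →
      (∀ x ∈ B.subrects, u x ∈ Icc B.a B.b ∧ v x ∈ Icc B.c B.d) →
      ContinuousOn (fun x => f (u x, v x)) B.subrects :=
    fun hu hv h => hf.comp (hu.prodMk hv).continuousOn fun x hx => h x hx
  show ContinuousOn (fun x : ℝ × ℝ × ℝ × ℝ => |f (x.2.1, x.2.2.2) - f (x.1, x.2.2.2) -
    f (x.2.1, x.2.2.1) + f (x.1, x.2.2.1)| ^ p) B.subrects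
  refine ((((corner ?_ ?_ ?_).sub (corner ?_ ?_ ?_)).sub (corner ?_ ?_ ?_)).add
    (corner ?_ ?_ ?_)).abs.rpow_const fun _ _ => Or.inr hp
  all_goals first
    | fun_prop
    | intro x hx
      simp only [subrects, mem_ofPred_eq] at hx
      simp only [mem_Icc]
      grind

theorem exists_incPow_le_incPow_add (hp : 0 ≤ p) (hf : ContinuousOn f B.toSet) {η : ℝ}
    (hη : 0 < η) : ∃ δ > 0, ∀ Q Q' : Rect, Q.coords ∈ B.subrects → Q'.coords ∈ B.subrects →
      dist Q.coords Q'.coords < δ → Q.incPow p f ≤ Q'.incPow p f + ENNReal.ofReal η := by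
  have huc := (isCompact_subrects B).uniformContinuousOn_of_continuous
    (continuousOn_abs_inc_rpow hp hf)
  obtain ⟨δ, hδ, h⟩ := Metric.uniformContinuousOn_iff.1 huc η hη
  refine ⟨δ, hδ, fun Q Q' hQ hQ' hQQ' => ?_⟩
  have hclose := h _ hQ _ hQ' hQQ'
  rw [ofCoords_coords, ofCoords_coords, Real.dist_eq, abs_lt] at hclose
  simp only [incPow, ENNReal.ofReal_rpow_of_nonneg (abs_nonneg _) hp]
  rw [← ENNReal.ofReal_add (by positivity) hη.le]
  exact ENNReal.ofReal_le_ofReal (by linarith)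

theorem exists_isPartition_cVarSum_le_add (hR : R.Valid) (hfin : cVarSum p f R ≠ ⊤) {ε : ℝ≥0∞}
    (hε : ε ≠ 0) : ∃ P, IsPartition R P ∧ cVarSum p f R ≤ ∑ Q ∈ P, Q.incPow p f + ε := by
  by_cases h0 : cVarSum p f R = 0
  · exact ⟨{R}, isPartition_singleton hR, by simp [h0]⟩
  have hlt := ENNReal.sub_lt_self hfin h0 hε
  simp only [cVarSum, lt_iSup_iff] at hlt
  obtain ⟨P, hP, hlt⟩ := hlt
  exact ⟨P, hP, tsub_le_iff_right.1 hlt.le⟩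

/-- Inner regularity: clamping a near-optimal partition of `S` to a slightly smaller `W` moves all
corners by less than `δ`, so by uniform continuity it changes each term of the sum very little. -/
theorem exists_cVarSum_le_cVarSum_add_of_subrect (hp : 0 < p) (hf : ContinuousOn f S.toSet)
    (hS : S.Valid) (hfin : cVarSum p f S ≠ ⊤) {ε : ℝ} (hε : 0 < ε) :
    ∃ δ > 0, ∀ W : Rect, W.Valid → W.IsSubrect S → dist W.coords S.coords < δ →
      cVarSum p f S ≤ cVarSum p f W + ENNReal.ofReal ε := by
  obtain ⟨P, hP, hPS⟩ := exists_isPartition_cVarSum_le_add hS hfin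
    (ENNReal.ofReal_pos.2 (half_pos hε)).ne'
  set η := ε / 2 / (P.card + 1)
  have hη : P.card * ENNReal.ofReal η ≤ ENNReal.ofReal (ε / 2) := by
    rw [← ENNReal.ofReal_natCast, ← ENNReal.ofReal_mul (by positivity)]
    refine ENNReal.ofReal_le_ofReal ?_
    rw [mul_div_assoc', div_le_iff₀ (by positivity)]
    nlinarith
  obtain ⟨δ, hδ, hclose⟩ := exists_incPow_le_incPow_add hp.le hf (η := η) (by positivity)
  refine ⟨δ, hδ, fun W hW hWS hdist => ?_⟩
  have hterm : ∀ Q ∈ P, Q.incPow p f ≤ (Q.clamp W).incPow p f + ENNReal.ofReal η := by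
    intro Q hQ
    have hQS := hP.isSubrect hQ
    refine hclose _ _ (coords_mem_subrects.2 ⟨hP.1 Q hQ, hQS⟩)
      (coords_mem_subrects.2 ⟨clamp_valid hW, (clamp_isSubrect (hP.1 Q hQ)).trans hQS⟩) ?_
    rw [dist_comm]
    exact (dist_clamp_le (hP.1 Q hQ) hQS).trans_lt hdist
  calc cVarSum p f S
      ≤ ∑ Q ∈ P, ((Q.clamp W).incPow p f + ENNReal.ofReal η) + ENNReal.ofReal (ε / 2) :=
        hPS.trans (add_le_add_left (Finset.sum_le_sum hterm) _)
    _ ≤ cVarSum p f W + ENNReal.ofReal (ε / 2) + ENNReal.ofReal (ε / 2) := by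
        rw [Finset.sum_add_distrib, Finset.sum_const, nsmul_eq_mul]
        gcongr
        exact sum_incPow_clamp_le_cVarSum hp hP hW hWS
    _ = cVarSum p f W + ENNReal.ofReal ε := by
        rw [add_assoc, ← ENNReal.ofReal_add (half_pos hε).le (half_pos hε).le, add_halves]

end InnerRegularity

theorem ENNReal.add_rpow_le_mul_rpow_add_mul_rpow {p θ : ℝ} (hp : 0 ≤ p) (hθ : 0 < θ)
    (x y : ℝ≥0∞) :
    (x + y) ^ p ≤
      ENNReal.ofReal ((1 + θ) ^ p) * x ^ p + ENNReal.ofReal ((1 + θ⁻¹) ^ p) * y ^ p := by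
  have key : ∀ {t : ℝ} {u v : ℝ≥0∞}, 0 < t → v ≤ ENNReal.ofReal t * u →
      (u + v) ^ p ≤ ENNReal.ofReal ((1 + t) ^ p) * u ^ p := by
    intro t u v ht h
    calc (u + v) ^ p ≤ (ENNReal.ofReal (1 + t) * u) ^ p := by
          rw [ENNReal.ofReal_add zero_le_one ht.le, ENNReal.ofReal_one, add_mul, one_mul]
          gcongr
      _ = ENNReal.ofReal ((1 + t) ^ p) * u ^ p := by
          rw [ENNReal.mul_rpow_of_nonneg _ _ hp, ENNReal.ofReal_rpow_of_nonneg (by positivity) hp]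
  rcases le_total y (ENNReal.ofReal θ * x) with h | h
  · exact (key hθ h).trans le_self_add
  · have hx : x ≤ ENNReal.ofReal θ⁻¹ * y := calc
      x = ENNReal.ofReal θ⁻¹ * (ENNReal.ofReal θ * x) := by
        rw [← mul_assoc, ← ENNReal.ofReal_mul (inv_nonneg.2 hθ.le), inv_mul_cancel₀ hθ.ne',
          ENNReal.ofReal_one, one_mul]
      _ ≤ ENNReal.ofReal θ⁻¹ * y := by gcongr
    exact (add_comm x y ▸ key (inv_pos.2 hθ) hx).trans le_add_self

theorem exists_ofReal_one_add_rpow_mul_le {p : ℝ} (hp : 0 ≤ p) {a : ℝ≥0∞} (ha : a ≠ ⊤) {ε : ℝ}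
    (hε : 0 < ε) : ∃ θ > 0, ENNReal.ofReal ((1 + θ) ^ p) * a ≤ a + ENNReal.ofReal ε := by
  have hlim : Tendsto (fun θ : ℝ => ENNReal.ofReal ((1 + θ) ^ p) * a) (𝓝 0) (𝓝 a) := by
    have : Continuous fun θ : ℝ => (1 + θ) ^ p :=
      (continuous_const.add continuous_id).rpow_const fun _ => Or.inr hp
    replace := this.tendsto 0
    simpa using ENNReal.Tendsto.mul_const (ENNReal.tendsto_ofReal this) (.inr ha)
  obtain ⟨θ, hθ, hlt⟩ := (hlim.eventually (gt_mem_nhds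
    (ENNReal.lt_add_right ha (ENNReal.ofReal_pos.2 hε).ne'))).exists_gt
  exact ⟨θ, hθ, hlt.le⟩

section OuterRegularity

variable {p : ℝ} {f : ℝ × ℝ → ℝ} {B R S U : Rect}

/-- Each member of a partition of `S` is split along the sides of `R` into its clamps to `R` and
to the four frame pieces; the clamps to the frame are grouped together before taking `p`-th powers,
which costs the factor `4 ^ (p - 1)`. -/
theorem cVarSum_le_mul_cVarSum_add_mul_sum_frame (hp : 1 ≤ p) {θ : ℝ} (hθ : 0 < θ)
    (hR : R.Valid) (hRS : R.IsSubrect S) :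
    cVarSum p f S ≤ ENNReal.ofReal ((1 + θ) ^ p) * cVarSum p f R +
      ENNReal.ofReal ((1 + θ⁻¹) ^ p * 4 ^ (p - 1)) * ∑ i, cVarSum p f (S.frame R i) := by
  have hp0 : 0 < p := zero_lt_one.trans_le hp
  set c₁ := ENNReal.ofReal ((1 + θ) ^ p)
  set c₂ := ENNReal.ofReal ((1 + θ⁻¹) ^ p * 4 ^ (p - 1))
  have hc₂ : c₂ = ENNReal.ofReal ((1 + θ⁻¹) ^ p) * 4 ^ (p - 1) := by
    simp only [c₂]
    rw [ENNReal.ofReal_mul (Real.rpow_nonneg (add_pos one_pos (inv_pos.2 hθ)).le _),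
      ← ENNReal.ofReal_rpow_of_nonneg (x := 4) (by norm_num) (by linarith), ENNReal.ofReal_ofNat]
  refine cVarSum_le fun P hP => ?_
  have hterm : ∀ Q ∈ P, Q.incPow p f ≤
      c₁ * (Q.clamp R).incPow p f + c₂ * ∑ i, (Q.clamp (S.frame R i)).incPow p f := by
    intro Q hQ
    simp only [incPow, ← Real.enorm_eq_ofReal_abs]
    calc ‖Q.inc f‖ₑ ^ p
        ≤ (‖(Q.clamp R).inc f‖ₑ + ∑ i, ‖(Q.clamp (S.frame R i)).inc f‖ₑ) ^ p := by
          rw [inc_eq_inc_clamp_add_sum_frame f (hP.1 Q hQ) (hP.isSubrect hQ)]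
          gcongr
          exact (enorm_add_le _ _).trans (by gcongr; exact enorm_sum_le _ _)
      _ ≤ c₁ * ‖(Q.clamp R).inc f‖ₑ ^ p + ENNReal.ofReal ((1 + θ⁻¹) ^ p) *
            (∑ i, ‖(Q.clamp (S.frame R i)).inc f‖ₑ) ^ p :=
          ENNReal.add_rpow_le_mul_rpow_add_mul_rpow hp0.le hθ _ _
      _ ≤ c₁ * ‖(Q.clamp R).inc f‖ₑ ^ p + c₂ * ∑ i, ‖(Q.clamp (S.frame R i)).inc f‖ₑ ^ p := by
          rw [hc₂, mul_assoc]
          gcongr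
          simpa using ENNReal.rpow_sum_le_const_mul_sum_rpow Finset.univ
            (fun i => ‖(Q.clamp (S.frame R i)).inc f‖ₑ) hp
  calc ∑ Q ∈ P, Q.incPow p f
      ≤ ∑ Q ∈ P, (c₁ * (Q.clamp R).incPow p f +
          c₂ * ∑ i, (Q.clamp (S.frame R i)).incPow p f) := Finset.sum_le_sum hterm
    _ = c₁ * ∑ Q ∈ P, (Q.clamp R).incPow p f +
          c₂ * ∑ i, ∑ Q ∈ P, (Q.clamp (S.frame R i)).incPow p f := by
        rw [Finset.sum_add_distrib, ← Finset.mul_sum, ← Finset.mul_sum, Finset.sum_comm]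
    _ ≤ c₁ * cVarSum p f R + c₂ * ∑ i, cVarSum p f (S.frame R i) := by
        gcongr with i
        · exact sum_incPow_clamp_le_cVarSum hp0 hP hR hRS
        · exact sum_incPow_clamp_le_cVarSum hp0 hP (frame_valid hR hRS i) (frame_isSubrect hR hRS i)

theorem exists_cVarSum_le_of_union (hp : 0 < p) (hf : ContinuousOn f B.toSet)
    (hB : cVarSum p f B ≠ ⊤) (hU : U.Valid) (hUB : U.IsSubrect B) {ε : ℝ} (hε : 0 < ε) :
    ∃ δ > 0, ∀ W V : Rect, W.toSet ∪ V.toSet = U.toSet → Disjoint W.openSet V.openSet →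
      W.Valid → V.Valid → dist W.coords U.coords < δ → cVarSum p f V ≤ ENNReal.ofReal ε := by
  obtain ⟨δ, hδ, h⟩ := exists_cVarSum_le_cVarSum_add_of_subrect hp
    (hf.mono hUB.toSet_subset) hU (ne_top_of_le_ne_top hB (cVarSum_mono hp hU hUB)) hε
  refine ⟨δ, hδ, fun W V hunion hdisj hW hV hdist => ?_⟩
  have hWU := isSubrect_of_toSet_subset hW (hunion ▸ subset_union_left)
  have hWfin := ne_top_of_le_ne_top hB (cVarSum_mono hp hW (hWU.trans hUB))
  exact (ENNReal.add_le_add_iff_left hWfin).1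
    ((cVarSum_add_cVarSum_le hp hunion hdisj hW hV).trans (h W hW hWU hdist))

/-- Each frame piece lies in the part cut off from a fixed rectangle (the part of `B` beside `R`)
by a cut close to its edge, which inner regularity makes small. -/
theorem exists_cVarSum_frame_le (hp : 0 < p) (hf : ContinuousOn f B.toSet)
    (hB : cVarSum p f B ≠ ⊤) (hR : R.Valid) (hRB : R.IsSubrect B) {ε : ℝ} (hε : 0 < ε)
    (i : Fin 4) : ∃ δ > 0, ∀ S : Rect, S.IsSubrect B → R.IsSubrect S →
      dist S.coords R.coords < δ → cVarSum p f (S.frame R i) ≤ ENNReal.ofReal ε := by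
  have hBv := hRB.valid hR
  obtain ⟨ha, hb, hc, hd⟩ := hRB
  fin_cases i
  · obtain ⟨δ, hδ, h⟩ := exists_cVarSum_le_of_union hp hf hB (U := ⟨B.a, R.a, B.c, B.d⟩)
      ⟨ha, hBv.2⟩ ⟨le_rfl, hR.1.trans hb, le_rfl, le_rfl⟩ hε
    refine ⟨δ, hδ, fun S ⟨hSa, _, hSc, hSd⟩ hRS hdist =>
      (cVarSum_mono hp (frame_valid hR hRS 0) (S := ⟨S.a, R.a, B.c, B.d⟩)
        ⟨le_rfl, le_rfl, hSc, hSd⟩).trans (h _ _ (vcut_union hSa hRS.1) (vcut_disjoint ..)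
          ⟨hSa, hBv.2⟩ ⟨hRS.1, hBv.2⟩
          (dist_coords_lt_iff.2 ⟨?_, (dist_coords_lt_iff.1 hdist).1, ?_, ?_⟩))⟩ <;>
      simpa using hδ
  · obtain ⟨δ, hδ, h⟩ := exists_cVarSum_le_of_union hp hf hB (U := ⟨R.b, B.b, B.c, B.d⟩)
      ⟨hb, hBv.2⟩ ⟨ha.trans hR.1, le_rfl, le_rfl, le_rfl⟩ hε
    refine ⟨δ, hδ, fun S ⟨_, hSb, hSc, hSd⟩ hRS hdist =>
      (cVarSum_mono hp (frame_valid hR hRS 1) (S := ⟨R.b, S.b, B.c, B.d⟩)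
        ⟨le_rfl, le_rfl, hSc, hSd⟩).trans (h _ _ ((union_comm ..).trans (vcut_union hRS.2.1 hSb))
          (vcut_disjoint ..).symm ⟨hSb, hBv.2⟩ ⟨hRS.2.1, hBv.2⟩
          (dist_coords_lt_iff.2 ⟨(dist_coords_lt_iff.1 hdist).2.1, ?_, ?_, ?_⟩))⟩ <;>
      simpa using hδ
  · obtain ⟨δ, hδ, h⟩ := exists_cVarSum_le_of_union hp hf hB (U := ⟨B.a, B.b, B.c, R.c⟩)
      ⟨hBv.1, hc⟩ ⟨le_rfl, le_rfl, le_rfl, hR.2.trans hd⟩ hε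
    refine ⟨δ, hδ, fun S ⟨_, _, hSc, _⟩ hRS hdist =>
      (cVarSum_mono hp (frame_valid hR hRS 2) (S := ⟨B.a, B.b, S.c, R.c⟩)
        ⟨ha, hb, le_rfl, le_rfl⟩).trans (h _ _ (hcut_union hSc hRS.2.2.1) (hcut_disjoint ..)
          ⟨hBv.1, hSc⟩ ⟨hBv.1, hRS.2.2.1⟩
          (dist_coords_lt_iff.2 ⟨?_, ?_, ?_, (dist_coords_lt_iff.1 hdist).2.2.1⟩))⟩ <;>
      simpa using hδ
  · obtain ⟨δ, hδ, h⟩ := exists_cVarSum_le_of_union hp hf hB (U := ⟨B.a, B.b, R.d, B.d⟩)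
      ⟨hBv.1, hd⟩ ⟨le_rfl, le_rfl, hc.trans hR.2, le_rfl⟩ hε
    refine ⟨δ, hδ, fun S ⟨_, _, _, hSd⟩ hRS hdist =>
      (cVarSum_mono hp (frame_valid hR hRS 3) (S := ⟨B.a, B.b, R.d, S.d⟩)
        ⟨ha, hb, le_rfl, le_rfl⟩).trans (h _ _ ((union_comm ..).trans (hcut_union hRS.2.2.2 hSd))
          (hcut_disjoint ..).symm ⟨hBv.1, hSd⟩ ⟨hBv.1, hRS.2.2.2⟩
          (dist_coords_lt_iff.2 ⟨?_, ?_, (dist_coords_lt_iff.1 hdist).2.2.2, ?_⟩))⟩ <;>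
      simpa using hδ

theorem exists_sum_cVarSum_frame_le (hp : 0 < p) (hf : ContinuousOn f B.toSet)
    (hB : cVarSum p f B ≠ ⊤) (hR : R.Valid) (hRB : R.IsSubrect B) {ε : ℝ} (hε : 0 < ε) :
    ∃ δ > 0, ∀ S : Rect, S.IsSubrect B → R.IsSubrect S → dist S.coords R.coords < δ →
      ∑ i, cVarSum p f (S.frame R i) ≤ ENNReal.ofReal ε := by
  choose δ hδ h using exists_cVarSum_frame_le hp hf hB hR hRB (ε := ε / 4) (by positivity)
  refine ⟨Finset.univ.inf' Finset.univ_nonempty δ, (Finset.lt_inf'_iff _).2 fun i _ => hδ i,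
    fun S hSB hRS hdist => ?_⟩
  calc ∑ i, cVarSum p f (S.frame R i) ≤ ∑ _i : Fin 4, ENNReal.ofReal (ε / 4) :=
        Finset.sum_le_sum fun i _ =>
          h i S hSB hRS (hdist.trans_le (Finset.inf'_le _ (Finset.mem_univ i)))
    _ = ENNReal.ofReal ε := by
        rw [Finset.sum_const, Finset.card_univ, Fintype.card_fin, nsmul_eq_mul, Nat.cast_ofNat,
          ← ENNReal.ofReal_ofNat 4, ← ENNReal.ofReal_mul (by norm_num)]
        ring_nf

theorem exists_cVarSum_le_cVarSum_add_of_superrect (hp : 1 ≤ p) (hf : ContinuousOn f B.toSet)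
    (hB : cVarSum p f B ≠ ⊤) (hR : R.Valid) (hRB : R.IsSubrect B) {ε : ℝ} (hε : 0 < ε) :
    ∃ δ > 0, ∀ S : Rect, S.IsSubrect B → R.IsSubrect S → dist S.coords R.coords < δ →
      cVarSum p f S ≤ cVarSum p f R + ENNReal.ofReal ε := by
  have hp0 : 0 < p := zero_lt_one.trans_le hp
  have hε2 : 0 < ε / 2 := half_pos hε
  obtain ⟨θ, hθ, hθR⟩ := exists_ofReal_one_add_rpow_mul_le hp0.le
    (ne_top_of_le_ne_top hB (cVarSum_mono hp0 hR hRB)) hε2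
  set k := (1 + θ⁻¹) ^ p * 4 ^ (p - 1)
  have hk : 0 ≤ k := by positivity
  obtain ⟨δ, hδ, hframe⟩ := exists_sum_cVarSum_frame_le hp0 hf hB hR hRB
    (ε := ε / 2 / (k + 1)) (by positivity)
  refine ⟨δ, hδ, fun S hSB hRS hdist => ?_⟩
  calc cVarSum p f S
      ≤ ENNReal.ofReal ((1 + θ) ^ p) * cVarSum p f R +
          ENNReal.ofReal k * ∑ i, cVarSum p f (S.frame R i) :=
        cVarSum_le_mul_cVarSum_add_mul_sum_frame hp hθ hR hRS
    _ ≤ cVarSum p f R + ENNReal.ofReal (ε / 2) + ENNReal.ofReal (ε / 2) := by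
        gcongr
        grw [hframe S hSB hRS hdist, ← ENNReal.ofReal_mul hk]
        refine ENNReal.ofReal_le_ofReal ?_
        rw [mul_div_assoc', div_le_iff₀ (by positivity)]
        nlinarith
    _ = cVarSum p f R + ENNReal.ofReal ε := by
        rw [add_assoc, ← ENNReal.ofReal_add hε2.le hε2.le, add_halves]

end OuterRegularity

section Continuity

variable {p : ℝ} {f : ℝ × ℝ → ℝ} {B : Rect}

/-- For `R'` near `R`, clamping `R'` to `R` gives a slightly smaller subrectangle of `R` whose
variation is at most that of `R'`, and the hull of `R` and `R'` is a slightly larger rectangle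
containing `R'`. -/
theorem continuousOn_cVarSum (hp : 1 ≤ p) (hf : ContinuousOn f B.toSet) (hB : cVarSum p f B ≠ ⊤) :
    ContinuousOn (fun x => cVarSum p f (ofCoords x)) B.subrects := by
  have hp0 : 0 < p := zero_lt_one.trans_le hp
  intro x hx
  set R := ofCoords x
  obtain ⟨hR, hRB⟩ := (coords_mem_subrects (R := R)).1 hx
  have hRfin := ne_top_of_le_ne_top hB (cVarSum_mono hp0 hR hRB)
  refine (ENNReal.tendsto_nhds hRfin).2 fun ε hε => ?_
  obtain ⟨ε', -, hε', hε'ε⟩ := ENNReal.lt_iff_exists_real_btwn.1 hε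
  rw [ENNReal.ofReal_pos] at hε'
  obtain ⟨δ₁, hδ₁, hinner⟩ := exists_cVarSum_le_cVarSum_add_of_subrect hp0
    (hf.mono hRB.toSet_subset) hR hRfin hε'
  obtain ⟨δ₂, hδ₂, houter⟩ := exists_cVarSum_le_cVarSum_add_of_superrect hp hf hB hR hRB hε'
  filter_upwards [inter_mem_nhdsWithin _ (Metric.ball_mem_nhds x (lt_min hδ₁ hδ₂))]
    with y ⟨hy, hyx⟩
  obtain ⟨hR', hR'B⟩ := (coords_mem_subrects (R := ofCoords y)).1 hy
  have hdist : dist (ofCoords y).coords R.coords < min δ₁ δ₂ := hyx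
  refine ⟨tsub_le_iff_right.2 ?_, ?_⟩
  · calc cVarSum p f R ≤ cVarSum p f (R.clamp (ofCoords y)) + ENNReal.ofReal ε' :=
          hinner _ (clamp_valid hR') (clamp_isSubrect hR)
            ((dist_clamp_le hR (.refl R)).trans_lt (hdist.trans_le (min_le_left _ _)))
      _ ≤ cVarSum p f (ofCoords y) + ε := add_le_add (cVarSum_clamp_le hp0 hR hR') hε'ε.le
  · calc cVarSum p f (ofCoords y) ≤ cVarSum p f (R.hull (ofCoords y)) :=
          cVarSum_mono hp0 hR' isSubrect_hull_right
      _ ≤ cVarSum p f R + ENNReal.ofReal ε' :=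
          houter _ (hull_isSubrect hRB hR'B) isSubrect_hull_left
            (dist_hull_le.trans_lt (hdist.trans_le (min_le_right _ _)))
      _ ≤ cVarSum p f R + ε := add_le_add le_rfl hε'ε.le

end Continuity

theorem controlled_var_is_2D_control_general (p T : ℝ) (hp : 1 ≤ p)
    (f : ℝ × ℝ → ℝ) (hcont : ContinuousOn f (Rect.mk 0 T 0 T).toSet)
    (hf : cVarSum p f (Rect.mk 0 T 0 T) ≠ ⊤) :
    Is2DControl T (fun R => cVarSum p f R) := by
  have hp0 : 0 < p := zero_lt_one.trans_le hp
  refine ⟨fun R hR => ?_, continuousOn_cVarSum hp hcont hf, fun R _ hdeg => cVarSum_eq_zero hp0 ?_,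
    fun R _ _ P hP => sum_cVarSum_le hp0 hP⟩
  · by_cases hRv : R.Valid
    · exact ne_top_of_le_ne_top hf (cVarSum_mono hp0 hRv (isSubrect_of_toSet_subset hRv hR))
    · simp [cVarSum_eq_zero hp0 (openSet_eq_empty_of_not_valid hRv)]
  · rcases hdeg with h | h <;> simp [Rect.openSet, h]

/-- if `f : [0,T]² → ℝ` is continuous and of finite controlled
`p`-variation, then `ω(R) := |f|^p_{p-var;R}` is a 2D control. -/
theorem controlled_var_is_2D_control (p T : ℝ) (hp : 1 ≤ p) (hT : 0 < T)
    (f : ℝ × ℝ → ℝ) (hcont : ContinuousOn f (Rect.mk 0 T 0 T).toSet)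
    (hf : cVarSum p f (Rect.mk 0 T 0 T) ≠ ⊤) :
    Is2DControl T (fun R => cVarSum p f R) :=
  controlled_var_is_2D_control_general p T hp f hcont hf
end

section
/- Let H ∈ (0,1/2) and C^H(s,t) := (1/2)(t^{2H}+s^{2H}−|t−s|^{2H}) on [0,2]^2. Then there does not exist a super-additive map ω on rectangles, vanishing on degenerate rectangles, such that |C^H(R)|^{1/(2H)} ≤ ω(R) for all rectangles R ⊆ [0,2]^2 and such that ω([s,t]^2) = C·(t−s) for some constant C for all 0 ≤ s ≤ t ≤ 2. -/
open Set
open scoped ENNReal NNReal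

/-- The covariance of fractional Brownian motion with Hurst parameter `H`:
`C^H(s,t) = (1/2)(t^{2H} + s^{2H} - |t-s|^{2H})`. -/
noncomputable def fbmCov (H : ℝ) : ℝ × ℝ → ℝ :=
  fun x => (x.2 ^ (2 * H) + x.1 ^ (2 * H) - |x.2 - x.1| ^ (2 * H)) / 2

/-! Cutting `[0,2]²` at `(1,1)` gives the diagonal squares `[0,1]²`, `[1,2]²` and the two
off-diagonal squares. Super-additivity and `ω([s,t]²) = C (t - s)` force the values of `ω` on the
off-diagonal squares to sum to at most `2C - C - C = 0`. But domination makes both nonnegative and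
`ω([0,1] × [1,2]) ≥ |C^H([0,1] × [1,2])|^{1/(2H)} > 0`, because that increment is the covariance
`(2^{2H} - 2) / 2` of two consecutive increments of fractional Brownian motion, nonzero for
`H ≠ 1/2`. -/

namespace Rect

lemma toSet_subset_toSet {Q R : Rect} (ha : R.a ≤ Q.a) (hb : Q.b ≤ R.b) (hc : R.c ≤ Q.c)
    (hd : Q.d ≤ R.d) : Q.toSet ⊆ R.toSet :=
  prod_mono (Icc_subset_Icc ha hb) (Icc_subset_Icc hc hd)

lemma disjoint_openSet_of_disjoint_fst {Q Q' : Rect}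
    (h : Disjoint (Ioo Q.a Q.b) (Ioo Q'.a Q'.b)) : Disjoint Q.openSet Q'.openSet :=
  disjoint_prod.2 (Or.inl h)

lemma disjoint_openSet_of_disjoint_snd {Q Q' : Rect}
    (h : Disjoint (Ioo Q.c Q.d) (Ioo Q'.c Q'.d)) : Disjoint Q.openSet Q'.openSet :=
  disjoint_prod.2 (Or.inr h)

noncomputable def quadrants (R : Rect) (x y : ℝ) : Finset Rect :=
  {⟨R.a, x, R.c, y⟩, ⟨x, R.b, y, R.d⟩, ⟨R.a, x, y, R.d⟩, ⟨x, R.b, R.c, y⟩}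

lemma isPartition_quadrants {R : Rect} {x y : ℝ} (hx : x ∈ Icc R.a R.b) (hy : y ∈ Icc R.c R.d) :
    IsPartition R (R.quadrants x y) := by
  obtain ⟨hax, hxb⟩ := hx
  obtain ⟨hcy, hyd⟩ := hy
  have hdx : Disjoint (Ioo R.a x) (Ioo x R.b) :=
    Ico_disjoint_Ico_same.mono Ioo_subset_Ico_self Ioo_subset_Ico_self
  have hdy : Disjoint (Ioo R.c y) (Ioo y R.d) :=
    Ico_disjoint_Ico_same.mono Ioo_subset_Ico_self Ioo_subset_Ico_self
  refine ⟨?valid, ?disjoint, ?cover⟩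
  case valid =>
    simp only [quadrants, Finset.mem_insert, Finset.mem_singleton]
    rintro Q (rfl | rfl | rfl | rfl) <;> exact ⟨‹_›, ‹_›⟩
  case disjoint =>
    simp only [quadrants, Finset.coe_insert, Finset.coe_singleton]
    rintro Q (rfl | rfl | rfl | rfl) Q' (rfl | rfl | rfl | rfl) hne <;>
      first
        | exact absurd rfl hne
        | exact disjoint_openSet_of_disjoint_fst hdx
        | exact disjoint_openSet_of_disjoint_fst hdx.symm
        | exact disjoint_openSet_of_disjoint_snd hdy
        | exact disjoint_openSet_of_disjoint_snd hdy.symm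
  case cover =>
    ext ⟨p, q⟩
    simp only [quadrants, Finset.mem_insert, Finset.mem_singleton, mem_iUnion, toSet, mem_prod,
      mem_Icc, exists_prop]
    constructor
    · rintro ⟨Q, (rfl | rfl | rfl | rfl), hp, hq⟩ <;> dsimp only at hp hq <;>
        exact ⟨⟨by linarith, by linarith⟩, ⟨by linarith, by linarith⟩⟩
    · rintro ⟨⟨hap, hpb⟩, ⟨hcq, hqd⟩⟩
      rcases le_total p x with hpx | hxp <;> rcases le_total q y with hqy | hyq
      · exact ⟨_, Or.inl rfl, ⟨hap, hpx⟩, ⟨hcq, hqy⟩⟩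
      · exact ⟨_, Or.inr (Or.inr (Or.inl rfl)), ⟨hap, hpx⟩, ⟨hyq, hqd⟩⟩
      · exact ⟨_, Or.inr (Or.inr (Or.inr rfl)), ⟨hxp, hpb⟩, ⟨hcq, hqy⟩⟩
      · exact ⟨_, Or.inr (Or.inl rfl), ⟨hxp, hpb⟩, ⟨hyq, hqd⟩⟩

lemma sum_quadrants {M : Type*} [AddCommMonoid M] (f : Rect → M) {R : Rect} {x y : ℝ}
    (hx : R.a ≠ x) (hy : R.c ≠ y) :
    ∑ Q ∈ R.quadrants x y, f Q =
      f ⟨R.a, x, R.c, y⟩ + f ⟨x, R.b, y, R.d⟩ + f ⟨R.a, x, y, R.d⟩ + f ⟨x, R.b, R.c, y⟩ := by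
  rw [quadrants, Finset.sum_insert (by simp [hx, hy]),
    Finset.sum_insert (by simp [hx.symm, hy.symm]), Finset.sum_pair (by simp [hx]),
    add_assoc, add_assoc]

end Rect

lemma inc_fbmCov_consecutive {H : ℝ} (hH : H ≠ 0) :
    Rect.inc (fbmCov H) ⟨0, 1, 1, 2⟩ = (2 : ℝ) ^ (2 * H) / 2 - 1 := by
  have h0 : (0 : ℝ) ^ (2 * H) = 0 := Real.zero_rpow (by positivity)
  norm_num [Rect.inc, fbmCov, h0]

lemma inc_fbmCov_consecutive_ne_zero {H : ℝ} (hH0 : H ≠ 0) (hH : 2 * H ≠ 1) :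
    Rect.inc (fbmCov H) ⟨0, 1, 1, 2⟩ ≠ 0 := by
  rw [inc_fbmCov_consecutive hH0, sub_ne_zero, ne_eq, div_eq_one_iff_eq two_ne_zero]
  have h := (Real.rpow_right_inj two_pos (by norm_num : (2 : ℝ) ≠ 1)).not.2 hH
  rwa [Real.rpow_one] at h

/-- for `H ∈ (0,1/2)` there is no super-additive map `ω` on rectangles
in `[0,2]²`, vanishing on degenerate rectangles, dominating `|C^H(R)|^{1/(2H)}`, and
satisfying `ω([s,t]²) = C·(t-s)` for some constant `C`. -/
theorem no_2D_control_for_fbmCov (H : ℝ) (hH0 : 0 < H) (hH : H < 1 / 2) :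
    ¬ ∃ (ω : Rect → ℝ) (C : ℝ),
        (∀ R : Rect, R.Valid → R.toSet ⊆ (Rect.mk 0 2 0 2).toSet →
          ∀ P : Finset Rect, IsPartition R P → ∑ Q ∈ P, ω Q ≤ ω R) ∧
        (∀ R : Rect, R.Valid → (R.a = R.b ∨ R.c = R.d) → ω R = 0) ∧
        (∀ R : Rect, R.Valid → R.toSet ⊆ (Rect.mk 0 2 0 2).toSet →
          |Rect.inc (fbmCov H) R| ^ (1 / (2 * H)) ≤ ω R) ∧
        (∀ s t : ℝ, 0 ≤ s → s ≤ t → t ≤ 2 → ω (Rect.mk s t s t) = C * (t - s)) := by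
  rintro ⟨ω, C, hsup, -, hdom, hdiag⟩
  have hsplit := hsup ⟨0, 2, 0, 2⟩ ⟨zero_le_two, zero_le_two⟩ subset_rfl _
    (Rect.isPartition_quadrants (x := 1) (y := 1) ⟨zero_le_one, one_le_two⟩
      ⟨zero_le_one, one_le_two⟩)
  rw [Rect.sum_quadrants _ zero_ne_one zero_ne_one] at hsplit
  have hlow := hdiag 0 1 le_rfl zero_le_one one_le_two
  have hhigh := hdiag 1 2 zero_le_one one_le_two le_rfl
  have hwhole := hdiag 0 2 le_rfl zero_le_two le_rfl
  have hinc := inc_fbmCov_consecutive_ne_zero hH0.ne' (by linarith)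
  have hupper : 0 < ω ⟨0, 1, 1, 2⟩ :=
    (Real.rpow_pos_of_pos (abs_pos.2 hinc) _).trans_le <| hdom _ ⟨zero_le_one, one_le_two⟩ <|
      Rect.toSet_subset_toSet le_rfl one_le_two zero_le_one le_rfl
  have hlower : 0 ≤ ω ⟨1, 2, 0, 1⟩ :=
    (Real.rpow_nonneg (abs_nonneg _) _).trans <| hdom _ ⟨one_le_two, zero_le_one⟩ <|
      Rect.toSet_subset_toSet zero_le_one le_rfl le_rfl one_le_two
  linarith
end
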